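/- Let b_1,...,b_s and c_1,...,c_s be real numbers satisfying the order conditions for the multi-indices (1), (2) and (1,2), namely Σ_i b_i = 1, Σ_i b_i c_i = 1/2, and Σ_i (1/2) b_i^2 c_i + Σ_{i<j} b_i b_j c_j = 1/3. Then the order condition for the multi-index (2,1) also holds: Σ_i (1/2) b_i^2 c_i + Σ_{i<j} b_i b_j c_i = 1/6. -/

import Mathlib

/-! Expanding `(∑ bᵢ) (∑ bⱼ cⱼ)` into its diagonal and its two triangles gives
`(1)·(2) = 2·(diagonal term) + (1,2)-sum + (2,1)-sum`, so the (2,1) condition reads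
`1 · 1/2 - 1/3 = 1/6`. -/

open Finset

theorem sum_Icc_sum_Icc_eq_diag_add_upper {M : Type*} [AddCommMonoid M]
    (f : ℕ → ℕ → M) (m n : ℕ) :
    ∑ i ∈ Icc m n, ∑ j ∈ Icc m n, f i j
      = ∑ i ∈ Icc m n, f i i + ∑ i ∈ Icc m n, ∑ j ∈ Icc (i + 1) n, (f i j + f j i) := by
  induction n with
  | zero => rcases m with _ | m <;> simp
  | succ n ih =>
    by_cases hm : m ≤ n + 1
    · have top : ∀ i ∈ Icc m n,
          ∑ j ∈ Icc (i + 1) (n + 1), (f i j + f j i)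
            = ∑ j ∈ Icc (i + 1) n, (f i j + f j i) + (f i (n + 1) + f (n + 1) i) := fun i hi =>
        sum_Icc_succ_top (by simpa using (mem_Icc.mp hi).2) _
      simp only [sum_Icc_succ_top hm]
      rw [sum_congr rfl top, Icc_eq_empty_of_lt (Nat.lt_succ_self _), sum_empty, add_zero,
        sum_add_distrib, sum_add_distrib, sum_add_distrib, ih]
      abel
    · simp [Icc_eq_empty_of_lt (not_le.mp hm)]

theorem sum_mul_sum_mul_eq_diag_add_upper {R : Type*} [CommSemiring R] (b c : ℕ → R) (s : ℕ) :
    (∑ i ∈ Icc 1 s, b i) * (∑ i ∈ Icc 1 s, b i * c i)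
      = ∑ i ∈ Icc 1 s, b i ^ 2 * c i
        + ∑ i ∈ Icc 1 s, ∑ j ∈ Icc (i + 1) s, b i * b j * c j
        + ∑ i ∈ Icc 1 s, ∑ j ∈ Icc (i + 1) s, b i * b j * c i := by
  rw [sum_mul_sum, sum_Icc_sum_Icc_eq_diag_add_upper]
  simp only [add_assoc, ← sum_add_distrib]
  refine sum_congr rfl fun i _ => ?_
  congr 1
  · ring
  · exact sum_congr rfl fun j _ => by ring

/-- The generalized order condition for the multi-index (2,1) is implied by the order
conditions for the multi-indices (1), (2) and (1,2). -/
theorem stmt_6 (s : ℕ) (b c : ℕ → ℝ)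
    (h1 : ∑ i ∈ Finset.Icc 1 s, b i = 1)
    (h2 : ∑ i ∈ Finset.Icc 1 s, b i * c i = 1 / 2)
    (h12 : (∑ i ∈ Finset.Icc 1 s, (1 / 2) * b i ^ 2 * c i)
        + ∑ i ∈ Finset.Icc 1 s, ∑ j ∈ Finset.Icc (i + 1) s, b i * b j * c j = 1 / 3) :
    (∑ i ∈ Finset.Icc 1 s, (1 / 2) * b i ^ 2 * c i)
        + ∑ i ∈ Finset.Icc 1 s, ∑ j ∈ Finset.Icc (i + 1) s, b i * b j * c i = 1 / 6 := by
  have hsplit := sum_mul_sum_mul_eq_diag_add_upper b c s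
  have hdiag : ∑ i ∈ Icc 1 s, (1 / 2) * b i ^ 2 * c i = (1 / 2) * ∑ i ∈ Icc 1 s, b i ^ 2 * c i := by
    rw [mul_sum]; exact sum_congr rfl fun i _ => by ring
  rw [h1, h2] at hsplit
  linarith
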